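/- arXiv:0905.4318 — 3 statements merged into one kernel-verified Lean document; each statement's English description precedes it below -/
import Mathlib

section
/- Let Q = ℝᵈ and L : Q × Q → ℝ be C², and suppose F⁻L(q₀,q₁) = (q₀, -D₁L(q₀,q₁)) is a C¹ diffeomorphism of Q × Q onto Q × Q*. Then the one-step map Φ = F⁺L ∘ (F⁻L)⁻¹ : Q × Q* → Q × Q* is symplectic: it preserves the canonical symplectic form ω = ∑ dqⁱ ∧ dpᵢ, i.e., for all z ∈ Q × Q* and tangent vectors u, v, ω(DΦ(z)u, DΦ(z)v) = ω(u, v). -/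
noncomputable def D1 {Q : Type*} [NormedAddCommGroup Q] [NormedSpace ℝ Q]
    (L : Q × Q → ℝ) (a b : Q) : Q →L[ℝ] ℝ :=
  fderiv ℝ (fun x => L (x, b)) a

noncomputable def D2 {Q : Type*} [NormedAddCommGroup Q] [NormedSpace ℝ Q]
    (L : Q × Q → ℝ) (a b : Q) : Q →L[ℝ] ℝ :=
  fderiv ℝ (fun y => L (a, y)) b

noncomputable def Fminus {Q : Type*} [NormedAddCommGroup Q] [NormedSpace ℝ Q]
    (L : Q × Q → ℝ) (z : Q × Q) : Q × (Q →L[ℝ] ℝ) :=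
  (z.1, -D1 L z.1 z.2)

noncomputable def Fplus {Q : Type*} [NormedAddCommGroup Q] [NormedSpace ℝ Q]
    (L : Q × Q → ℝ) (z : Q × Q) : Q × (Q →L[ℝ] ℝ) :=
  (z.2, D2 L z.1 z.2)

/-- The canonical symplectic bilinear form on Q × Q*:
ω((a,α),(b,β)) = α(b) - β(a). -/
noncomputable def symplForm {Q : Type*} [NormedAddCommGroup Q] [NormedSpace ℝ Q]
    (u v : Q × (Q →L[ℝ] ℝ)) : ℝ :=
  u.2 v.1 - v.2 u.1

/-!
Write `B` for the Hessian of `L` at `w = (F⁻L)⁻¹ z`. The derivatives of `F⁻L` and `F⁺L` at `w`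
are `x ↦ (x₁, -B x (·, 0))` and `x ↦ (x₂, B x (0, ·))`, and expanding gives
`ω(DF⁺ x, DF⁺ y) - ω(DF⁻ x, DF⁻ y) = B x y - B y x`, which vanishes by the symmetry of second
derivatives. Differentiating `F⁻L ∘ (F⁻L)⁻¹ = id` shows that `DF⁻ ∘ D(F⁻L)⁻¹ = id`, so
`DΦ = DF⁺ ∘ D(F⁻L)⁻¹` preserves `ω`.
-/

theorem HasFDerivAt.apply_fderiv_of_leftInverse {𝕜 F G : Type*} [NontriviallyNormedField 𝕜]
    [NormedAddCommGroup F] [NormedSpace 𝕜 F] [NormedAddCommGroup G] [NormedSpace 𝕜 G]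
    {g : F → G} {ψ : G → F} {A : F →L[𝕜] G} {z : G} (hg : HasFDerivAt g A (ψ z))
    (hψ : DifferentiableAt 𝕜 ψ z) (hinv : Function.LeftInverse g ψ) (x : G) :
    A (fderiv 𝕜 ψ z x) = x := by
  have h : HasFDerivAt (g ∘ ψ) (A.comp (fderiv 𝕜 ψ z)) z := hg.comp z hψ.hasFDerivAt
  rw [hinv.comp_eq_id] at h
  exact DFunLike.congr_fun (h.unique (hasFDerivAt_id z)) x

section

variable {E : Type*} [NormedAddCommGroup E] [NormedSpace ℝ E]

noncomputable def precompInl : ((E × E) →L[ℝ] ℝ) →L[ℝ] (E →L[ℝ] ℝ) :=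
  (ContinuousLinearMap.compL ℝ E (E × E) ℝ).flip (ContinuousLinearMap.inl ℝ E E)

noncomputable def precompInr : ((E × E) →L[ℝ] ℝ) →L[ℝ] (E →L[ℝ] ℝ) :=
  (ContinuousLinearMap.compL ℝ E (E × E) ℝ).flip (ContinuousLinearMap.inr ℝ E E)

@[simp] theorem precompInl_apply (φ : (E × E) →L[ℝ] ℝ) (x : E) : precompInl φ x = φ (x, 0) :=
  rfl

@[simp] theorem precompInr_apply (φ : (E × E) →L[ℝ] ℝ) (x : E) : precompInr φ x = φ (0, x) :=
  rfl

theorem D1_eq_precompInl {L : E × E → ℝ} {a b : E} (hL : DifferentiableAt ℝ L (a, b)) :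
    D1 L a b = precompInl (fderiv ℝ L (a, b)) :=
  (hL.hasFDerivAt.comp a (hasFDerivAt_prodMk_left a b)).fderiv

theorem D2_eq_precompInr {L : E × E → ℝ} {a b : E} (hL : DifferentiableAt ℝ L (a, b)) :
    D2 L a b = precompInr (fderiv ℝ L (a, b)) :=
  (hL.hasFDerivAt.comp b (hasFDerivAt_prodMk_right a b)).fderiv

noncomputable def linFminus (B : (E × E) →L[ℝ] (E × E) →L[ℝ] ℝ) :
    (E × E) →L[ℝ] E × (E →L[ℝ] ℝ) :=
  (ContinuousLinearMap.fst ℝ E E).prod (-(precompInl.comp B))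

noncomputable def linFplus (B : (E × E) →L[ℝ] (E × E) →L[ℝ] ℝ) :
    (E × E) →L[ℝ] E × (E →L[ℝ] ℝ) :=
  (ContinuousLinearMap.snd ℝ E E).prod (precompInr.comp B)

variable {L : E × E → ℝ} {w : E × E}

theorem hasFDerivAt_Fminus (hL : Differentiable ℝ L)
    (hL' : DifferentiableAt ℝ (fderiv ℝ L) w) :
    HasFDerivAt (Fminus L) (linFminus (fderiv ℝ (fderiv ℝ L) w)) w := by
  have h : Fminus L = fun z => (z.1, -precompInl (fderiv ℝ L z)) :=
    funext fun z => by rw [Fminus, D1_eq_precompInl (hL z)]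
  rw [h]
  exact hasFDerivAt_fst.prodMk (precompInl.hasFDerivAt.comp w hL'.hasFDerivAt).neg

theorem hasFDerivAt_Fplus (hL : Differentiable ℝ L)
    (hL' : DifferentiableAt ℝ (fderiv ℝ L) w) :
    HasFDerivAt (Fplus L) (linFplus (fderiv ℝ (fderiv ℝ L) w)) w := by
  have h : Fplus L = fun z => (z.2, precompInr (fderiv ℝ L z)) :=
    funext fun z => by rw [Fplus, D2_eq_precompInr (hL z)]
  rw [h]
  exact hasFDerivAt_snd.prodMk ((precompInr (E := E)).hasFDerivAt.comp w hL'.hasFDerivAt)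

theorem symplForm_linFplus_sub_symplForm_linFminus (B : (E × E) →L[ℝ] (E × E) →L[ℝ] ℝ)
    (x y : E × E) :
    symplForm (linFplus B x) (linFplus B y) - symplForm (linFminus B x) (linFminus B y) =
      B x y - B y x := by
  have split : ∀ v v' : E × E, B v v' = B v (v'.1, 0) + B v (0, v'.2) := fun v v' => by
    rw [← map_add, Prod.mk_add_mk, add_zero, zero_add]
  simp only [symplForm, linFplus, linFminus, ContinuousLinearMap.prod_apply,
    ContinuousLinearMap.coe_fst', ContinuousLinearMap.coe_snd', ContinuousLinearMap.comp_apply,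
    neg_apply, precompInl_apply, precompInr_apply, split x y, split y x]
  ring

theorem symplForm_linFplus_eq_symplForm_linFminus {B : (E × E) →L[ℝ] (E × E) →L[ℝ] ℝ}
    (hB : ∀ x y, B x y = B y x) (x y : E × E) :
    symplForm (linFplus B x) (linFplus B y) = symplForm (linFminus B x) (linFminus B y) := by
  rw [← sub_eq_zero, symplForm_linFplus_sub_symplForm_linFminus, hB, sub_self]

end

/-- The one-step map Φ = F⁺L ∘ (F⁻L)⁻¹ is symplectic. -/
theorem one_step_map_symplectic
    (d : ℕ) (L : (Fin d → ℝ) × (Fin d → ℝ) → ℝ) (hL : ContDiff ℝ 2 L)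
    (hbij : Function.Bijective (Fminus L))
    (hinv : ContDiff ℝ 1 (Function.invFun (Fminus L))) :
    ∀ (z : (Fin d → ℝ) × ((Fin d → ℝ) →L[ℝ] ℝ))
      (u v : (Fin d → ℝ) × ((Fin d → ℝ) →L[ℝ] ℝ)),
      symplForm
        (fderiv ℝ (Fplus L ∘ Function.invFun (Fminus L)) z u)
        (fderiv ℝ (Fplus L ∘ Function.invFun (Fminus L)) z v)
        = symplForm u v := by
  intro z u v
  set ψ := Function.invFun (Fminus L)
  have hL1 : Differentiable ℝ L := hL.differentiable two_ne_zero
  have hL2 : DifferentiableAt ℝ (fderiv ℝ L) (ψ z) :=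
    (hL.fderiv_right (m := 1) le_rfl).differentiable one_ne_zero _
  have hψ : DifferentiableAt ℝ ψ z := hinv.differentiable one_ne_zero z
  have hsymm : IsSymmSndFDerivAt ℝ L (ψ z) :=
    hL.contDiffAt.isSymmSndFDerivAt (by simp [minSmoothness_of_isRCLikeNormedField])
  have hDψ := (hasFDerivAt_Fminus hL1 hL2).apply_fderiv_of_leftInverse hψ
    (Function.rightInverse_invFun hbij.surjective)
  rw [((hasFDerivAt_Fplus hL1 hL2).comp z hψ.hasFDerivAt).fderiv,
    ContinuousLinearMap.comp_apply, ContinuousLinearMap.comp_apply,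
    symplForm_linFplus_eq_symplForm_linFminus hsymm, hDψ, hDψ]
end

section
/- Let Q = ℝᵈ and L : TQ ≅ Q × Q → ℝ be C¹. Consider the Hamilton–Pontryagin action S̃(q,v,p) = ∫_a^b [L(q(t),v(t)) + p(t)·(q'(t) - v(t))] dt on C¹ curves (q,v,p) : [a,b] → Q × Q × Q*. Then (q,v,p) is a critical point of S̃ with respect to all C¹ variations (δq, δv, δp) with δq(a) = δq(b) = 0 if and only if the implicit Euler–Lagrange equations hold: p'(t) = D₁L(q(t),v(t)), p(t) = D₂L(q(t),v(t)), and q'(t) = v(t) for all t ∈ [a,b]. -/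
/-! The integrand of the Hamilton–Pontryagin action is a C¹ function `lagrangian L` of the
jet `((q, v), (p, q'))`, so differentiating under the integral sign identifies the derivative of the
action along a variation with the first variation
`∫ D₁L δq + D₂L δv + δp (q' - v) + p (δq' - δv)`.
Under the implicit Euler–Lagrange equations this integrand is the derivative of `t ↦ p t (δq t)`,
which vanishes at both ends. Conversely, the variations `δp = φ • ℓ`, `δv = φ • w` and `δq = φ • w`
(the last after an integration by parts) turn a vanishing first variation into
`∫ φ * f = 0` for every bump `φ`, and the fundamental lemma of the calculus of variations
gives `f = 0` for each of the three equations. -/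

open Set Filter MeasureTheory

theorem hasDerivAt_intervalIntegral_comp_add_smul {V E : Type*} [NormedAddCommGroup V]
    [NormedSpace ℝ V] [NormedAddCommGroup E] [NormedSpace ℝ E] {Φ : V → E}
    (hΦ : ContDiff ℝ 1 Φ) {γ η : ℝ → V} (hγ : Continuous γ) (hη : Continuous η) (a b : ℝ) :
    HasDerivAt (fun ε : ℝ => ∫ t in a..b, Φ (γ t + ε • η t))
      (∫ t in a..b, fderiv ℝ Φ (γ t) (η t)) 0 := by
  set F' : ℝ → ℝ → E := fun ε t => fderiv ℝ Φ (γ t + ε • η t) (η t)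
  have hF' : Continuous (Function.uncurry F') :=
    ((hΦ.continuous_fderiv one_ne_zero).comp (by fun_prop)).clm_apply (hη.comp continuous_snd)
  have hF : ∀ ε : ℝ, Continuous fun t => Φ (γ t + ε • η t) := fun ε =>
    hΦ.continuous.comp (by fun_prop)
  obtain ⟨C, hC⟩ := ((isCompact_closedBall (0 : ℝ) 1).prod isCompact_uIcc)
    |>.exists_bound_of_continuousOn (hF'.continuousOn (s := Metric.closedBall 0 1 ×ˢ uIcc a b))
  have hderiv : ∀ ε t, HasDerivAt (fun x : ℝ => Φ (γ t + x • η t)) (F' ε t) ε := fun ε t =>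
    (hΦ.differentiable one_ne_zero _).hasFDerivAt.comp_hasDerivAt ε
      (((hasDerivAt_id ε).smul_const (η t)).const_add (γ t) |>.congr_deriv (one_smul ℝ _))
  simpa [F'] using (intervalIntegral.hasDerivAt_integral_of_dominated_loc_of_deriv_le
    (Metric.closedBall_mem_nhds 0 one_pos)
    (Eventually.of_forall fun ε => (hF ε).aestronglyMeasurable)
    ((hF 0).intervalIntegrable a b) (hF'.comp (Continuous.prodMk_right 0)).aestronglyMeasurable
    (Eventually.of_forall fun t ht ε hε => hC (ε, t) ⟨hε, uIoc_subset_uIcc ht⟩)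
    intervalIntegrable_const (Eventually.of_forall fun t _ ε _ => hderiv ε t)).2

theorem eqOn_Icc_zero_of_forall_intervalIntegral_mul_eq_zero {f : ℝ → ℝ} (hf : Continuous f)
    {a b : ℝ} (hab : a < b)
    (h : ∀ φ : ℝ → ℝ, ContDiff ℝ 1 φ → tsupport φ ⊆ Ioo a b → ∫ t in a..b, φ t * f t = 0) :
    EqOn f 0 (Icc a b) := by
  have hae : ∀ᵐ t, t ∈ Ioo a b → f t = 0 := by
    refine isOpen_Ioo.ae_eq_zero_of_integral_contDiff_smul_eq_zero
      (hf.locallyIntegrable.locallyIntegrableOn _) fun φ hφ _ hsupp => ?_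
    rw [← h φ (hφ.of_le (by exact_mod_cast le_top)) hsupp, intervalIntegral.integral_of_le hab.le,
      setIntegral_eq_integral_of_forall_compl_eq_zero]
    · rfl
    · exact fun t ht => by
        simp [image_eq_zero_of_notMem_tsupport fun h => ht (Ioo_subset_Ioc_self (hsupp h))]
  have hIoo : EqOn f 0 (Ioo a b) :=
    Measure.eqOn_open_of_ae_eq ((ae_restrict_iff' measurableSet_Ioo).2 hae) isOpen_Ioo
      hf.continuousOn continuousOn_const
  simpa [closure_Ioo hab.ne] using hIoo.closure hf continuous_const

variable {Q : Type*} [NormedAddCommGroup Q] [NormedSpace ℝ Q]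

theorem D1_eq_fderiv_comp_inl {L : Q × Q → ℝ} {x y : Q} (hL : DifferentiableAt ℝ L (x, y)) :
    D1 L x y = (fderiv ℝ L (x, y)).comp (ContinuousLinearMap.inl ℝ Q Q) :=
  (hL.hasFDerivAt.comp x (hasFDerivAt_prodMk_left x y)).fderiv

theorem D2_eq_fderiv_comp_inr {L : Q × Q → ℝ} {x y : Q} (hL : DifferentiableAt ℝ L (x, y)) :
    D2 L x y = (fderiv ℝ L (x, y)).comp (ContinuousLinearMap.inr ℝ Q Q) :=
  (hL.hasFDerivAt.comp y (hasFDerivAt_prodMk_right x y)).fderiv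

theorem fderiv_apply_eq_D1_add_D2 {L : Q × Q → ℝ} {x y : Q} (hL : DifferentiableAt ℝ L (x, y))
    (u w : Q) : fderiv ℝ L (x, y) (u, w) = D1 L x y u + D2 L x y w := by
  rw [D1_eq_fderiv_comp_inl hL, D2_eq_fderiv_comp_inr hL, ContinuousLinearMap.comp_apply,
    ContinuousLinearMap.comp_apply, ← map_add]
  simp

theorem continuous_D1 {L : Q × Q → ℝ} (hL : ContDiff ℝ 1 L) :
    Continuous fun z : Q × Q => D1 L z.1 z.2 := by
  simp_rw [D1_eq_fderiv_comp_inl (hL.differentiable one_ne_zero _)]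
  exact (hL.continuous_fderiv one_ne_zero).clm_comp continuous_const

theorem continuous_D2 {L : Q × Q → ℝ} (hL : ContDiff ℝ 1 L) :
    Continuous fun z : Q × Q => D2 L z.1 z.2 := by
  simp_rw [D2_eq_fderiv_comp_inr (hL.differentiable one_ne_zero _)]
  exact (hL.continuous_fderiv one_ne_zero).clm_comp continuous_const

namespace HamiltonPontryagin

/-- `L(q, v) + p (q̇ - v)` at `z = ((q, v), (p, q̇))`. -/
def lagrangian (L : Q × Q → ℝ) (z : (Q × Q) × ((Q →L[ℝ] ℝ) × Q)) : ℝ :=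
  L z.1 + z.2.1 (z.2.2 - z.1.2)

theorem contDiff_lagrangian {L : Q × Q → ℝ} (hL : ContDiff ℝ 1 L) :
    ContDiff ℝ 1 (lagrangian L) :=
  (hL.comp contDiff_fst).add (contDiff_snd.fst.clm_apply (contDiff_snd.snd.sub contDiff_fst.snd))

theorem fderiv_lagrangian_apply {L : Q × Q → ℝ} {z : (Q × Q) × ((Q →L[ℝ] ℝ) × Q)}
    (hL : DifferentiableAt ℝ L z.1) (h : (Q × Q) × ((Q →L[ℝ] ℝ) × Q)) :
    fderiv ℝ (lagrangian L) z h =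
      fderiv ℝ L z.1 h.1 + h.2.1 (z.2.2 - z.1.2) + z.2.1 (h.2.2 - h.1.2) := by
  have hpair := (hasFDerivAt_snd (𝕜 := ℝ) (p := z)).fst.clm_apply
    ((hasFDerivAt_snd (𝕜 := ℝ) (p := z)).snd.sub (hasFDerivAt_fst (𝕜 := ℝ) (p := z)).snd)
  have hΦ : HasFDerivAt (lagrangian L) _ z :=
    (hL.hasFDerivAt.comp z (hasFDerivAt_fst (𝕜 := ℝ))).add hpair
  rw [hΦ.fderiv]
  simp only [ContinuousLinearMap.comp_sub, Pi.sub_apply, map_sub, add_apply,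
    ContinuousLinearMap.comp_apply, ContinuousLinearMap.coe_fst', sub_apply,
    ContinuousLinearMap.coe_snd', ContinuousLinearMap.flip_apply]
  ring

noncomputable def action (L : Q × Q → ℝ) (a b : ℝ) (q v : ℝ → Q) (p : ℝ → Q →L[ℝ] ℝ) : ℝ :=
  ∫ t in a..b, lagrangian L ((q t, v t), (p t, deriv q t))

noncomputable def firstVariation (L : Q × Q → ℝ) (a b : ℝ) (q v : ℝ → Q) (p : ℝ → Q →L[ℝ] ℝ)
    (δq δv : ℝ → Q) (δp : ℝ → Q →L[ℝ] ℝ) : ℝ :=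
  ∫ t in a..b, D1 L (q t) (v t) (δq t) + D2 L (q t) (v t) (δv t)
    + δp t (deriv q t - v t) + p t (deriv δq t - δv t)

theorem hasDerivAt_action_add_smul {L : Q × Q → ℝ} (hL : ContDiff ℝ 1 L) (a b : ℝ)
    {q v δq δv : ℝ → Q} {p δp : ℝ → Q →L[ℝ] ℝ} (hq : ContDiff ℝ 1 q) (hv : Continuous v)
    (hp : Continuous p) (hδq : ContDiff ℝ 1 δq) (hδv : Continuous δv) (hδp : Continuous δp) :
    HasDerivAt (fun ε : ℝ => action L a b (q + ε • δq) (v + ε • δv) (p + ε • δp))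
      (firstVariation L a b q v p δq δv δp) 0 := by
  have hderiv : ∀ ε : ℝ, deriv (q + ε • δq) = deriv q + ε • deriv δq := fun ε => by
    ext1 t
    exact ((hq.differentiable one_ne_zero t).hasDerivAt.add
      ((hδq.differentiable one_ne_zero t).hasDerivAt.const_smul ε)).deriv
  have h := hasDerivAt_intervalIntegral_comp_add_smul (contDiff_lagrangian hL)
    (γ := fun t => ((q t, v t), (p t, deriv q t)))
    (η := fun t => ((δq t, δv t), (δp t, deriv δq t)))
    (by fun_prop) (by fun_prop) a b
  have hLd : Differentiable ℝ L := hL.differentiable one_ne_zero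
  have hfun : (fun ε : ℝ => action L a b (q + ε • δq) (v + ε • δv) (p + ε • δp)) =
      fun ε => ∫ t in a..b, lagrangian L (((q t, v t), (p t, deriv q t))
        + ε • ((δq t, δv t), (δp t, deriv δq t))) := by
    funext ε
    simp only [action, hderiv]
    rfl
  rw [hfun]
  refine h.congr_deriv (intervalIntegral.integral_congr fun t _ => ?_)
  simp only [fderiv_lagrangian_apply (hLd _), fderiv_apply_eq_D1_add_D2 (hLd _)]

theorem firstVariation_eq_zero_of_implicitEulerLagrange {L : Q × Q → ℝ} {a b : ℝ} (hab : a ≤ b)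
    {q v δq δv : ℝ → Q} {p δp : ℝ → Q →L[ℝ] ℝ} (hp : ContDiff ℝ 1 p) (hδq : ContDiff ℝ 1 δq)
    (hEL : ∀ t ∈ Icc a b,
      deriv p t = D1 L (q t) (v t) ∧ p t = D2 L (q t) (v t) ∧ deriv q t = v t)
    (ha : δq a = 0) (hb : δq b = 0) :
    firstVariation L a b q v p δq δv δp = 0 := by
  have hintegrand : EqOn (fun t => D1 L (q t) (v t) (δq t) + D2 L (q t) (v t) (δv t)
      + δp t (deriv q t - v t) + p t (deriv δq t - δv t))
      (fun t => deriv p t (δq t) + p t (deriv δq t)) (uIcc a b) := by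
    intro t ht
    obtain ⟨hD1, hD2, hqv⟩ := hEL t (uIcc_of_le hab ▸ ht)
    simp only [← hD1, ← hD2, hqv, sub_self, map_zero, map_sub]
    abel
  have hFTC : ∀ t ∈ uIcc a b,
      HasDerivAt (fun s => p s (δq s)) (deriv p t (δq t) + p t (deriv δq t)) t :=
    fun t _ => (hp.differentiable one_ne_zero t).hasDerivAt.clm_apply
      (hδq.differentiable one_ne_zero t).hasDerivAt
  rw [firstVariation, intervalIntegral.integral_congr hintegrand,
    intervalIntegral.integral_eq_sub_of_hasDerivAt hFTC
      (Continuous.intervalIntegrable (by fun_prop) a b)]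
  simp [ha, hb]

theorem deriv_eqOn_of_forall_firstVariation_eq_zero {L : Q × Q → ℝ} {a b : ℝ} (hab : a < b)
    {q v : ℝ → Q} {p : ℝ → Q →L[ℝ] ℝ} (hq : ContDiff ℝ 1 q) (hv : Continuous v)
    (h : ∀ δp : ℝ → Q →L[ℝ] ℝ, ContDiff ℝ 1 δp → firstVariation L a b q v p 0 0 δp = 0) :
    EqOn (deriv q) v (Icc a b) := by
  intro t ht
  rw [← sub_eq_zero]
  refine SeparatingDual.eq_zero_of_forall_dual_eq_zero (R := ℝ) fun ℓ => ?_
  refine eqOn_Icc_zero_of_forall_intervalIntegral_mul_eq_zero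
    (ℓ.continuous.comp ((hq.continuous_deriv le_rfl).sub hv)) hab (fun φ hφ _ => ?_) ht
  simpa [firstVariation] using h (fun t => φ t • ℓ) (hφ.smul contDiff_const)

theorem eqOn_D2_of_forall_firstVariation_eq_zero {L : Q × Q → ℝ} (hL : ContDiff ℝ 1 L)
    {a b : ℝ} (hab : a < b) {q v : ℝ → Q} {p : ℝ → Q →L[ℝ] ℝ} (hq : Continuous q)
    (hv : Continuous v) (hp : Continuous p)
    (h : ∀ δv : ℝ → Q, ContDiff ℝ 1 δv → firstVariation L a b q v p 0 δv 0 = 0) :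
    EqOn p (fun t => D2 L (q t) (v t)) (Icc a b) := by
  intro t ht
  ext w
  refine (sub_eq_zero.1 (eqOn_Icc_zero_of_forall_intervalIntegral_mul_eq_zero
    (f := fun t => D2 L (q t) (v t) w - p t w)
    ((((continuous_D2 hL).comp (hq.prodMk hv)).clm_apply continuous_const).sub
      (hp.clm_apply continuous_const)) hab (fun φ hφ _ => ?_) ht)).symm
  simpa [firstVariation, mul_sub, ← sub_eq_add_neg] using
    h (fun t => φ t • w) (hφ.smul contDiff_const)

theorem deriv_eqOn_D1_of_forall_firstVariation_eq_zero {L : Q × Q → ℝ} (hL : ContDiff ℝ 1 L)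
    {a b : ℝ} (hab : a < b) {q v : ℝ → Q} {p : ℝ → Q →L[ℝ] ℝ} (hq : Continuous q)
    (hv : Continuous v) (hp : ContDiff ℝ 1 p)
    (h : ∀ δq : ℝ → Q, ContDiff ℝ 1 δq → δq a = 0 → δq b = 0 →
      firstVariation L a b q v p δq 0 0 = 0) :
    EqOn (deriv p) (fun t => D1 L (q t) (v t)) (Icc a b) := by
  intro t ht
  ext w
  have hD1w : Continuous fun t => D1 L (q t) (v t) w :=
    ((continuous_D1 hL).comp (hq.prodMk hv)).clm_apply continuous_const
  have hp'w : Continuous fun t => deriv p t w :=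
    (hp.continuous_deriv le_rfl).clm_apply continuous_const
  refine (sub_eq_zero.1 (eqOn_Icc_zero_of_forall_intervalIntegral_mul_eq_zero
    (hD1w.sub hp'w) hab (fun φ hφ hsupp => ?_) ht)).symm
  have hφ_endpoint : ∀ c ∉ Ioo a b, φ c = 0 := fun c hc =>
    image_eq_zero_of_notMem_tsupport fun h => hc (hsupp h)
  have hφa := hφ_endpoint a (fun h => h.1.false)
  have hφb := hφ_endpoint b (fun h => h.2.false)
  have hφd : Differentiable ℝ φ := hφ.differentiable one_ne_zero
  have hφ' : Continuous (deriv φ) := hφ.continuous_deriv le_rfl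
  have hvar : ∫ t in a..b, (φ t * D1 L (q t) (v t) w + deriv φ t * p t w) = 0 := by
    have hderiv : ∀ t, deriv (fun s => φ s • w) t = deriv φ t • w :=
      fun t => ((hφd t).hasDerivAt.smul_const w).deriv
    simpa [firstVariation, hderiv] using
      h (fun t => φ t • w) (hφ.smul contDiff_const) (by simp [hφa]) (by simp [hφb])
  have hIBP : ∫ t in a..b, (deriv φ t * p t w + φ t * deriv p t w) = 0 := by
    have hpw' : ∀ t, HasDerivAt (fun s => p s w) (deriv p t w) t := fun t => by
      simpa using (hp.differentiable one_ne_zero t).hasDerivAt.clm_apply (hasDerivAt_const t w)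
    rw [intervalIntegral.integral_deriv_mul_eq_sub (fun t _ => (hφd t).hasDerivAt)
      (fun t _ => hpw' t) (hφ'.intervalIntegrable a b) (hp'w.intervalIntegrable a b)]
    simp [hφa, hφb]
  calc ∫ t in a..b, φ t * (D1 L (q t) (v t) w - deriv p t w)
      = (∫ t in a..b, (φ t * D1 L (q t) (v t) w + deriv φ t * p t w))
        - ∫ t in a..b, (deriv φ t * p t w + φ t * deriv p t w) := by
        rw [← intervalIntegral.integral_sub (Continuous.intervalIntegrable (by fun_prop) a b)
          (Continuous.intervalIntegrable (by fun_prop) a b)]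
        exact intervalIntegral.integral_congr fun t _ => by ring
    _ = 0 := by rw [hvar, hIBP, sub_zero]

end HamiltonPontryagin

/-- The Hamilton–Pontryagin principle: a curve (q,v,p) is critical for the
Hamilton–Pontryagin action iff it satisfies the implicit Euler–Lagrange
equations p' = D₁L(q,v), p = D₂L(q,v), q' = v on [a,b]. -/
theorem hamilton_pontryagin_critical_iff_implicit_euler_lagrange
    (d : ℕ) (L : (Fin d → ℝ) × (Fin d → ℝ) → ℝ) (hL : ContDiff ℝ 1 L)
    (a b : ℝ) (hab : a < b)
    (q v : ℝ → Fin d → ℝ) (p : ℝ → (Fin d → ℝ) →L[ℝ] ℝ)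
    (hq : ContDiff ℝ 1 q) (hv : ContDiff ℝ 1 v) (hp : ContDiff ℝ 1 p) :
    (∀ (δq δv : ℝ → Fin d → ℝ) (δp : ℝ → (Fin d → ℝ) →L[ℝ] ℝ),
      ContDiff ℝ 1 δq → ContDiff ℝ 1 δv → ContDiff ℝ 1 δp →
      δq a = 0 → δq b = 0 →
      deriv (fun ε : ℝ =>
        ∫ t in a..b,
          (L (q t + ε • δq t, v t + ε • δv t)
            + (p t + ε • δp t)
              (deriv (fun u => q u + ε • δq u) t - (v t + ε • δv t)))) 0 = 0)
    ↔ (∀ t ∈ Set.Icc a b,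
        deriv p t = D1 L (q t) (v t) ∧
        p t = D2 L (q t) (v t) ∧
        deriv q t = v t) := by
  open HamiltonPontryagin in
  have hvariation (δq δv : ℝ → Fin d → ℝ) (δp : ℝ → (Fin d → ℝ) →L[ℝ] ℝ)
      (hδq : ContDiff ℝ 1 δq) (hδv : ContDiff ℝ 1 δv) (hδp : ContDiff ℝ 1 δp) :=
    (hasDerivAt_action_add_smul hL a b hq hv.continuous hp.continuous hδq hδv.continuous
      hδp.continuous).deriv
  constructor
  · intro hcrit t ht
    have hfirst (δq δv : ℝ → Fin d → ℝ) (δp : ℝ → (Fin d → ℝ) →L[ℝ] ℝ)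
        (hδq : ContDiff ℝ 1 δq) (hδv : ContDiff ℝ 1 δv) (hδp : ContDiff ℝ 1 δp)
        (ha : δq a = 0) (hb : δq b = 0) : firstVariation L a b q v p δq δv δp = 0 :=
      hvariation δq δv δp hδq hδv hδp ▸ hcrit δq δv δp hδq hδv hδp ha hb
    exact ⟨deriv_eqOn_D1_of_forall_firstVariation_eq_zero hL hab hq.continuous hv.continuous hp
        (fun δq hδq ha hb => hfirst δq 0 0 hδq contDiff_const contDiff_const ha hb) ht,
      eqOn_D2_of_forall_firstVariation_eq_zero hL hab hq.continuous hv.continuous hp.continuous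
        (fun δv hδv => hfirst 0 δv 0 contDiff_const hδv contDiff_const rfl rfl) ht,
      deriv_eqOn_of_forall_firstVariation_eq_zero hab hq hv.continuous
        (fun δp hδp => hfirst 0 0 δp contDiff_const contDiff_const hδp rfl rfl) ht⟩
  · intro hEL δq δv δp hδq hδv hδp ha hb
    exact (hvariation δq δv δp hδq hδv hδp).trans
      (firstVariation_eq_zero_of_implicitEulerLagrange hab.le hp hδq hEL ha hb)
end

section
/- Let G = ℝᵈ be a vector space viewed as a manifold and L : G → ℝ be C¹. Define the path-space action on E = {γ = (g, μ) : [0,1] → G × G* C¹ with μ(0) = 0}: S̃(γ) = ∫₀¹ L(g(s)) ds + ∫₀¹ μ(s)·g'(s) ds. Then γ = (g, μ) is a critical point of S̃ with respect to variations (δg, δμ) satisfying δμ(0) = 0 and δg(1) = 0 if and only if g is constant, g(s) ≡ g₀, and μ(s) = s·dL(g₀) for all s ∈ [0,1]; in particular μ(1) = dL(g₀). -/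
/-!
The first variation of `S̃` at `(g, μ)` in the direction `(δg, δμ)` is
`∫₀¹ dL(g)δg + δμ(g') + μ(δg')`. Taking `δg = 0` and `δμ = h • φ` with `h(0) = 0` gives
`∫₀¹ h (φ ∘ g)' = 0` for every functional `φ`, so each `φ ∘ g`, hence `g`, is constant on
`[0, 1]`. Taking `δμ = 0` and `δg = h • v` with `h(1) = 0` then gives
`∫₀¹ h dL(g₀)v + h' μ(·)v = 0`, which forces `μ(s)v = s dL(g₀)v`. In both cases the test
function `h` is chosen as a primitive of the defect, and an integration by parts turns the
identity into `∫₀¹ defect² = 0`. Conversely, for such `(g, μ)` the integrand of the first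
variation is the derivative of `s ↦ s dL(g₀)δg(s)`, which vanishes at both ends.
-/

open MeasureTheory Set Filter

theorem eqOn_zero_of_integral_mul_self_eq_zero {w : ℝ → ℝ} {a b : ℝ} (hab : a < b)
    (hw : Continuous w) (h : ∫ s in a..b, w s * w s = 0) : EqOn w 0 (Icc a b) := by
  have hae : (fun s => w s * w s) =ᵐ[volume.restrict (Icc a b)] 0 := by
    rw [← Measure.restrict_congr_set Ioc_ae_eq_Icc]
    exact (intervalIntegral.integral_eq_zero_iff_of_le_of_nonneg_ae hab.le
      (ae_of_all _ fun s => mul_self_nonneg (w s)) ((hw.mul hw).intervalIntegrable a b)).1 h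
  intro s hs
  exact mul_self_eq_zero.1 (Measure.eqOn_Icc_of_ae_eq volume hab.ne hae
    (hw.mul hw).continuousOn continuousOn_const hs)

theorem Continuous.contDiff_one_integral {ν : ℝ → ℝ} (hν : Continuous ν) (a : ℝ) :
    ContDiff ℝ 1 (fun u => ∫ x in a..u, ν x) := by
  rw [contDiff_one_iff_deriv]
  refine ⟨fun s => (hν.integral_hasStrictDerivAt a s).hasDerivAt.differentiableAt, ?_⟩
  rwa [funext (Continuous.deriv_integral ν hν a)]

theorem hasDerivAt_intervalIntegral_of_continuous_deriv
    {E : Type*} [NormedAddCommGroup E] [NormedSpace ℝ E]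
    {F F' : ℝ → ℝ → E} {a b x₀ : ℝ}
    (hF : ∀ x, Continuous (F x)) (hF' : Continuous (Function.uncurry F'))
    (hderiv : ∀ x t, HasDerivAt (F · t) (F' x t) x) :
    HasDerivAt (fun x => ∫ t in a..b, F x t) (∫ t in a..b, F' x₀ t) x₀ := by
  obtain ⟨C, hC⟩ := ((isCompact_closedBall x₀ 1).prod isCompact_uIcc).exists_bound_of_continuousOn
    hF'.continuousOn
  exact (intervalIntegral.hasDerivAt_integral_of_dominated_loc_of_deriv_le (bound := fun _ => C)
    (Metric.ball_mem_nhds x₀ one_pos) (Eventually.of_forall fun x => (hF x).aestronglyMeasurable)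
    ((hF x₀).intervalIntegrable a b)
    (hF'.comp (Continuous.prodMk_right x₀)).aestronglyMeasurable
    (ae_of_all _ fun t ht x hx =>
      hC (x, t) ⟨Metric.ball_subset_closedBall hx, uIoc_subset_uIcc ht⟩)
    intervalIntegrable_const (ae_of_all _ fun t _ x _ => hderiv x t)).2

theorem eqOn_of_forall_integral_mul_deriv_eq_zero {f : ℝ → ℝ} {a b : ℝ} (hab : a < b)
    (hf : ContDiff ℝ 1 f)
    (h : ∀ φ : ℝ → ℝ, ContDiff ℝ 1 φ → φ a = 0 → ∫ s in a..b, φ s * deriv f s = 0) :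
    EqOn f (fun _ => f b) (Icc a b) := by
  set w : ℝ → ℝ := fun s => f s - f b
  have hw : Continuous w := hf.continuous.sub continuous_const
  set φ : ℝ → ℝ := fun u => ∫ x in a..u, w x
  have hparts := intervalIntegral.integral_mul_deriv_eq_deriv_mul (u := φ) (v := w)
    (fun s _ => (hw.integral_hasStrictDerivAt a s).hasDerivAt)
    (fun s _ => ((hf.differentiable one_ne_zero s).hasDerivAt.sub_const (f b)))
    (hw.intervalIntegrable a b) ((hf.continuous_deriv le_rfl).intervalIntegrable a b)
  have hw_sq : ∫ s in a..b, w s * w s = 0 := by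
    rw [h φ (hw.contDiff_one_integral a) intervalIntegral.integral_same] at hparts
    simpa [w, φ] using hparts
  intro s hs
  exact sub_eq_zero.1 (eqOn_zero_of_integral_mul_self_eq_zero hab hw hw_sq hs)

theorem eqOn_sub_mul_of_forall_integral_eq_zero {m : ℝ → ℝ} {a b c : ℝ} (hab : a < b)
    (hm : Continuous m)
    (h : ∀ φ : ℝ → ℝ, ContDiff ℝ 1 φ → φ b = 0 → ∫ s in a..b, (φ s * c + deriv φ s * m s) = 0) :
    EqOn m (fun s => (s - a) * c) (Icc a b) := by
  set ν : ℝ → ℝ := fun s => m s - (s - a) * c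
  have hν : Continuous ν := by fun_prop
  set φ : ℝ → ℝ := fun u => ∫ x in b..u, ν x
  have hφ : ∀ s, HasDerivAt φ (ν s) s := fun s => (hν.integral_hasStrictDerivAt b s).hasDerivAt
  have hφ_cont : Continuous φ := (hν.contDiff_one_integral b).continuous
  have hcrit := h φ (hν.contDiff_one_integral b) intervalIntegral.integral_same
  simp only [fun s => (hφ s).deriv] at hcrit
  have hcrit_cont : Continuous fun s => φ s * c + ν s * m s := by fun_prop
  have hlinear_cont : Continuous fun s => φ s * c + ν s * ((s - a) * c) := by fun_prop
  have hlinear : ∫ s in a..b, (φ s * c + ν s * ((s - a) * c)) = 0 := by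
    rw [intervalIntegral.integral_eq_sub_of_hasDerivAt (f := fun s => φ s * ((s - a) * c))
      (fun s _ => ?_) (hlinear_cont.intervalIntegrable a b)]
    · simp [φ]
    · exact ((hφ s).mul (((hasDerivAt_id' s).sub_const a).mul_const c)).congr_deriv (by ring)
  have hν_sq : ∫ s in a..b, ν s * ν s = 0 := by
    calc ∫ s in a..b, ν s * ν s
        = ∫ s in a..b, ((φ s * c + ν s * m s) - (φ s * c + ν s * ((s - a) * c))) :=
          intervalIntegral.integral_congr fun s _ => by simp only [ν]; ring
      _ = 0 := by
          rw [intervalIntegral.integral_sub (hcrit_cont.intervalIntegrable a b)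
            (hlinear_cont.intervalIntegrable a b), hcrit, hlinear, sub_zero]
  intro s hs
  exact sub_eq_zero.1 (eqOn_zero_of_integral_mul_self_eq_zero hab hν hν_sq hs)

section PathAction

variable {E : Type*} [NormedAddCommGroup E] [NormedSpace ℝ E]
  {L : E → ℝ} {g δg : ℝ → E} {μ δμ : ℝ → E →L[ℝ] ℝ}

noncomputable def pathAction (L : E → ℝ) (g : ℝ → E) (μ : ℝ → E →L[ℝ] ℝ) : ℝ :=
  (∫ s in (0:ℝ)..1, L (g s)) + ∫ s in (0:ℝ)..1, μ s (deriv g s)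

noncomputable def firstVariation (L : E → ℝ) (g : ℝ → E) (μ : ℝ → E →L[ℝ] ℝ) (δg : ℝ → E)
    (δμ : ℝ → E →L[ℝ] ℝ) : ℝ :=
  ∫ s in (0:ℝ)..1, (fderiv ℝ L (g s) (δg s) + δμ s (deriv g s) + μ s (deriv δg s))

theorem hasDerivAt_pathAction (hL : ContDiff ℝ 1 L) (hg : ContDiff ℝ 1 g) (hμ : Continuous μ)
    (hδg : ContDiff ℝ 1 δg) (hδμ : Continuous δμ) :
    HasDerivAt (fun ε : ℝ => pathAction L (fun s => g s + ε • δg s) (fun s => μ s + ε • δμ s))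
      (firstVariation L g μ δg δμ) 0 := by
  have hgd := hg.differentiable one_ne_zero
  have hδgd := hδg.differentiable one_ne_zero
  have hg' := hg.continuous_deriv le_rfl
  have hδg' := hδg.continuous_deriv le_rfl
  have hL' := hL.continuous_fderiv one_ne_zero
  have hg_cont := hg.continuous
  have hδg_cont := hδg.continuous
  have hpert : ∀ ε : ℝ, deriv (fun u => g u + ε • δg u) = fun s => deriv g s + ε • deriv δg s :=
    fun ε => funext fun s => ((hgd s).hasDerivAt.add ((hδgd s).hasDerivAt.const_smul ε)).deriv
  have hpot := hasDerivAt_intervalIntegral_of_continuous_deriv (a := 0) (b := 1) (x₀ := 0)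
    (F := fun ε s => L (g s + ε • δg s)) (F' := fun ε s => fderiv ℝ L (g s + ε • δg s) (δg s))
    (fun ε => by fun_prop) (by fun_prop) fun ε s =>
      ((hL.differentiable one_ne_zero _).hasFDerivAt.comp_hasDerivAt ε
        (((hasDerivAt_id' ε).smul_const (δg s)).const_add (g s))).congr_deriv (by simp)
  have hkin := hasDerivAt_intervalIntegral_of_continuous_deriv (a := 0) (b := 1) (x₀ := 0)
    (F := fun ε s => (μ s + ε • δμ s) (deriv g s + ε • deriv δg s))
    (F' := fun ε s => δμ s (deriv g s + ε • deriv δg s) + (μ s + ε • δμ s) (deriv δg s))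
    (fun ε => by fun_prop) (by fun_prop) fun ε s =>
      (((hasDerivAt_id' ε).smul_const (δμ s)).const_add (μ s)).clm_apply
        (((hasDerivAt_id' ε).smul_const (deriv δg s)).const_add (deriv g s))
        |>.congr_deriv (by simp)
  simp only [pathAction, hpert]
  refine (hpot.add hkin).congr_deriv ?_
  simp only [firstVariation, zero_smul, add_zero, add_assoc]
  have hpot_cont : Continuous fun s => fderiv ℝ L (g s) (δg s) := by fun_prop
  have hkin_cont : Continuous fun s => δμ s (deriv g s) + μ s (deriv δg s) := by fun_prop
  exact (intervalIntegral.integral_add (hpot_cont.intervalIntegrable 0 1)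
    (hkin_cont.intervalIntegrable 0 1)).symm

theorem eqOn_const_of_firstVariation_eq_zero (hg : ContDiff ℝ 1 g)
    (hcrit : ∀ δμ : ℝ → E →L[ℝ] ℝ, ContDiff ℝ 1 δμ → δμ 0 = 0 →
      firstVariation L g μ (fun _ => 0) δμ = 0) :
    EqOn g (fun _ => g 0) (Icc 0 1) := by
  suffices hg1 : EqOn g (fun _ => g 1) (Icc 0 1) from
    fun s hs => (hg1 hs).trans (hg1 ⟨le_rfl, zero_le_one⟩).symm
  intro s hs
  refine (SeparatingDual.eq_iff_forall_dual_eq (R := ℝ)).2 fun φ => ?_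
  refine eqOn_of_forall_integral_mul_deriv_eq_zero zero_lt_one (φ.contDiff.comp hg)
    (fun h hh hh0 => ?_) hs
  have hφg : ∀ s, deriv (φ ∘ g) s = φ (deriv g s) := fun s =>
    (φ.hasFDerivAt.comp_hasDerivAt s ((hg.differentiable one_ne_zero s).hasDerivAt)).deriv
  have := hcrit (fun s => h s • φ) (hh.smul contDiff_const) (by simp [hh0])
  simpa [firstVariation, hφg] using this

theorem eqOn_smul_of_firstVariation_eq_zero (hg : EqOn g (fun _ => g 0) (Icc 0 1))
    (hμ : Continuous μ)
    (hcrit : ∀ δg : ℝ → E, ContDiff ℝ 1 δg → δg 1 = 0 →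
      firstVariation L g μ δg (fun _ => 0) = 0) :
    EqOn μ (fun s => s • fderiv ℝ L (g 0)) (Icc 0 1) := by
  intro s hs
  ext v
  have hweak : ∀ h : ℝ → ℝ, ContDiff ℝ 1 h → h 1 = 0 →
      ∫ t in (0:ℝ)..1, (h t * fderiv ℝ L (g 0) v + deriv h t * μ t v) = 0 := by
    intro h hh hh1
    refine Eq.trans ?_ (hcrit (fun s => h s • v) (hh.smul contDiff_const) (by simp [hh1]))
    apply intervalIntegral.integral_congr
    intro t ht
    rw [uIcc_of_le zero_le_one] at ht
    have hderiv : deriv (fun s => h s • v) t = deriv h t • v :=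
      ((hh.differentiable one_ne_zero t).hasDerivAt.smul_const v).deriv
    simp [hg ht, hderiv]
  simpa using eqOn_sub_mul_of_forall_integral_eq_zero zero_lt_one
    (hμ.clm_apply continuous_const) hweak hs

theorem firstVariation_eq_zero_of_eqOn (hL : ContDiff ℝ 1 L) (hg : ContDiff ℝ 1 g)
    (hμ : Continuous μ) (hδg : ContDiff ℝ 1 δg) (hδμ : Continuous δμ)
    (hg_const : EqOn g (fun _ => g 0) (Icc 0 1))
    (hμ_eq : EqOn μ (fun s => s • fderiv ℝ L (g 0)) (Icc 0 1)) (hδg1 : δg 1 = 0) :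
    firstVariation L g μ δg δμ = 0 := by
  set c := fderiv ℝ L (g 0)
  have hL' := hL.continuous_fderiv one_ne_zero
  have hg' := hg.continuous_deriv le_rfl
  have hδg' := hδg.continuous_deriv le_rfl
  have hg_cont := hg.continuous
  have hδg_cont := hδg.continuous
  have hcont : Continuous fun s =>
      fderiv ℝ L (g s) (δg s) + δμ s (deriv g s) + μ s (deriv δg s) := by fun_prop
  rw [firstVariation, intervalIntegral.integral_eq_sub_of_hasDerivAt_of_le zero_le_one
    (f := fun s => s * c (δg s)) (by fun_prop : Continuous _).continuousOn (fun s hs => ?_)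
    (hcont.intervalIntegrable 0 1)]
  · simp [hδg1]
  have hg's : deriv g s = 0 := by
    rw [((hg_const.mono Ioo_subset_Icc_self).eventuallyEq_of_mem
      (isOpen_Ioo.mem_nhds hs)).deriv_eq, deriv_const]
  refine ((hasDerivAt_id' s).mul (c.hasFDerivAt.comp_hasDerivAt s
    ((hδg.differentiable one_ne_zero s).hasDerivAt))).congr_deriv ?_
  simp [c, hg_const (Ioo_subset_Icc_self hs), hμ_eq (Ioo_subset_Icc_self hs), hg's]

end PathAction

theorem path_space_action_critical_iff_general
    (d : ℕ) (L : (Fin d → ℝ) → ℝ) (hL : ContDiff ℝ 1 L)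
    (g : ℝ → Fin d → ℝ) (μ : ℝ → (Fin d → ℝ) →L[ℝ] ℝ)
    (hg : ContDiff ℝ 1 g) (hμ : ContDiff ℝ 1 μ) :
    (∀ (δg : ℝ → Fin d → ℝ) (δμ : ℝ → (Fin d → ℝ) →L[ℝ] ℝ),
      ContDiff ℝ 1 δg → ContDiff ℝ 1 δμ → δμ 0 = 0 → δg 1 = 0 →
      deriv (fun ε : ℝ =>
        (∫ s in (0:ℝ)..1, L (g s + ε • δg s))
          + ∫ s in (0:ℝ)..1,
              (μ s + ε • δμ s) (deriv (fun u => g u + ε • δg u) s)) 0 = 0)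
    ↔ ((∀ s ∈ Set.Icc (0:ℝ) 1, g s = g 0) ∧
        (∀ s ∈ Set.Icc (0:ℝ) 1, μ s = s • fderiv ℝ L (g 0)) ∧
        μ 1 = fderiv ℝ L (g 0)) := by
  change (∀ δg δμ, ContDiff ℝ 1 δg → ContDiff ℝ 1 δμ → δμ 0 = 0 → δg 1 = 0 →
      deriv (fun ε : ℝ => pathAction L (fun s => g s + ε • δg s) (fun s => μ s + ε • δμ s)) 0
        = 0) ↔ _
  have hvar : ∀ δg δμ, ContDiff ℝ 1 δg → ContDiff ℝ 1 δμ →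
      deriv (fun ε : ℝ => pathAction L (fun s => g s + ε • δg s) (fun s => μ s + ε • δμ s)) 0
        = firstVariation L g μ δg δμ :=
    fun δg δμ hδg hδμ => (hasDerivAt_pathAction hL hg hμ.continuous hδg hδμ.continuous).deriv
  constructor
  · intro hcrit
    have hg_const : EqOn g (fun _ => g 0) (Icc 0 1) :=
      eqOn_const_of_firstVariation_eq_zero hg fun δμ hδμ hδμ0 =>
        hvar _ _ contDiff_const hδμ ▸ hcrit _ _ contDiff_const hδμ hδμ0 rfl
    have hμ_eq : EqOn μ (fun s => s • fderiv ℝ L (g 0)) (Icc 0 1) :=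
      eqOn_smul_of_firstVariation_eq_zero hg_const hμ.continuous fun δg hδg hδg1 =>
        hvar _ _ hδg contDiff_const ▸ hcrit _ _ hδg contDiff_const rfl hδg1
    exact ⟨hg_const, hμ_eq, by simpa using hμ_eq ⟨zero_le_one, le_rfl⟩⟩
  · rintro ⟨hg_const, hμ_eq, -⟩ δg δμ hδg hδμ - hδg1
    rw [hvar δg δμ hδg hδμ]
    exact firstVariation_eq_zero_of_eqOn hL hg hμ.continuous hδg hδμ.continuous hg_const hμ_eq
      hδg1

/-- The single-step path-space action S̃(g,μ) = ∫₀¹ L(g(s)) ds + ∫₀¹ μ(s)·g'(s) ds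
on paths in T*G ≅ G × G* starting at the zero section: γ = (g,μ) is critical
(with respect to variations with δμ(0) = 0, δg(1) = 0) iff g is constant and
μ(s) = s·dL(g₀); in particular μ(1) = dL(g₀). -/
theorem path_space_action_critical_iff
    (d : ℕ) (L : (Fin d → ℝ) → ℝ) (hL : ContDiff ℝ 1 L)
    (g : ℝ → Fin d → ℝ) (μ : ℝ → (Fin d → ℝ) →L[ℝ] ℝ)
    (hg : ContDiff ℝ 1 g) (hμ : ContDiff ℝ 1 μ) (hμ0 : μ 0 = 0) :
    (∀ (δg : ℝ → Fin d → ℝ) (δμ : ℝ → (Fin d → ℝ) →L[ℝ] ℝ),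
      ContDiff ℝ 1 δg → ContDiff ℝ 1 δμ → δμ 0 = 0 → δg 1 = 0 →
      deriv (fun ε : ℝ =>
        (∫ s in (0:ℝ)..1, L (g s + ε • δg s))
          + ∫ s in (0:ℝ)..1,
              (μ s + ε • δμ s) (deriv (fun u => g u + ε • δg u) s)) 0 = 0)
    ↔ ((∀ s ∈ Set.Icc (0:ℝ) 1, g s = g 0) ∧
        (∀ s ∈ Set.Icc (0:ℝ) 1, μ s = s • fderiv ℝ L (g 0)) ∧
        μ 1 = fderiv ℝ L (g 0)) :=
  path_space_action_critical_iff_general d L hL g μ hg hμ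
end
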